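/- arXiv:0902.4380 — 5 statements merged into one kernel-verified Lean document; each statement's English description precedes it below -/
import Mathlib

section
/- For every f ∈ H and every m ≥ 1 there exists a real polynomial q of degree at most m−1 such that ‖P f − K q(K) f‖ ≤ ‖P f − Σ_{i=1}^m ⟨f, φ_i⟩ φ_i‖ = (Σ_{i>m} ⟨f, φ_i⟩²)^{1/2}; that is, the m-th conjugate-gradient (population kernel PLS) approximation is at least as close to P f as the projection of f onto the first m principal components of K. -/
/-!
Write `c_i = ⟪f, φ_i⟫`, so that `P f = ∑ c_i φ_i`. The residual polynomial
`p(t) = ∏_{i<m} (1 - t / λ_i)` satisfies `p(0) = 1`, hence `p = 1 - X q` with `deg q ≤ m - 1`.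
As `K` kills `f - P f`, `P f - K q(K) f = p(K) P f = ∑ p(λ_i) c_i φ_i`. Now `p(λ_i) = 0` for
`i < m`, while `0 ≤ p(λ_i) ≤ 1` for `i ≥ m` because the eigenvalues decrease; by Parseval
the norm is therefore at most `(∑_{i ≥ m} c_i²)^{1/2} = ‖P f - ∑_{i<m} c_i φ_i‖`.
-/

open scoped RealInnerProductSpace

open Polynomial

theorem Polynomial.X_mul_neg_divX {R : Type*} [CommRing R] {p : R[X]} (hp : p.coeff 0 = 1) :
    X * -p.divX = 1 - p := by
  have h := X_mul_divX_add p
  rw [hp, C_1] at h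
  linear_combination -h

section Eigenvector

variable {𝕜 E : Type*} [NontriviallyNormedField 𝕜] [NormedAddCommGroup E] [NormedSpace 𝕜 E]

theorem ContinuousLinearMap.aeval_apply_of_apply_eq_smul (K : E →L[𝕜] E) {v : E} {μ : 𝕜}
    (h : K v = μ • v) (q : 𝕜[X]) : aeval K q v = q.eval μ • v := by
  induction q using Polynomial.induction_on' with
  | add p q hp hq => simp [hp, hq, add_smul]
  | monomial n a =>
    have hpow : (K ^ n) v = μ ^ n • v := by
      induction n with
      | zero => simp
      | succ n ih => rw [pow_succ, mul_apply_eq_comp, h, map_smul, ih, smul_smul,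
          pow_succ, mul_comm]
    simp [aeval_monomial, Algebra.algebraMap_eq_smul_one, hpow, smul_smul]

theorem ContinuousLinearMap.sub_apply_aeval_neg_divX (K : E →L[𝕜] E) {p : 𝕜[X]}
    (hp : p.coeff 0 = 1) {x y : E} (h : K (y - x) = 0) :
    x - K (aeval K (-p.divX) y) = aeval K p x := by
  have hK : K (aeval K (-p.divX) y) = aeval K (1 - p) y := by
    rw [← X_mul_neg_divX hp, map_mul, aeval_X, mul_apply_eq_comp]
  have hyx : aeval K p (y - x) = y - x := by
    rw [K.aeval_apply_of_apply_eq_smul (μ := 0) (by rw [h, zero_smul]), ← coeff_zero_eq_eval_zero,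
      hp, one_smul]
  rw [hK, map_sub, map_one, sub_apply, one_apply_eq_self,
    ← sub_add_cancel y x, map_add, hyx]
  abel

end Eigenvector

section Orthonormal

variable {ι H : Type*} [NormedAddCommGroup H] [InnerProductSpace ℝ H] {φ : ι → H}

theorem Orthonormal.hasSum_sq_of_hasSum (hφ : Orthonormal ℝ φ) {a : ι → ℝ} {y : H}
    (hy : HasSum (fun i => a i • φ i) y) : HasSum (fun i => a i ^ 2) (‖y‖ ^ 2) := by
  have hsq : ∀ s : Finset ι, ‖∑ i ∈ s, a i • φ i‖ ^ 2 = ∑ i ∈ s, a i ^ 2 := fun s => by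
    rw [← real_inner_self_eq_norm_sq, hφ.inner_sum a a s]
    simp only [conj_trivial, sq]
  exact (hy.norm.pow 2).congr hsq

theorem Orthonormal.norm_le_of_hasSum (hφ : Orthonormal ℝ φ) {a b : ι → ℝ} {x y : H}
    (hx : HasSum (fun i => a i • φ i) x) (hy : HasSum (fun i => b i • φ i) y)
    (hab : ∀ i, |a i| ≤ |b i|) : ‖x‖ ≤ ‖y‖ := by
  have hsq : ‖x‖ ^ 2 ≤ ‖y‖ ^ 2 :=
    hasSum_le (fun i => sq_le_sq.mpr (hab i)) (hφ.hasSum_sq_of_hasSum hx)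
      (hφ.hasSum_sq_of_hasSum hy)
  exact pow_le_pow_iff_left₀ (norm_nonneg _) (norm_nonneg _) two_ne_zero |>.mp hsq

theorem Orthonormal.hasSum_orthogonalProjectionOnto (hφ : Orthonormal ℝ φ)
    {V : Submodule ℝ H} [CompleteSpace V]
    (hspan : (Submodule.span ℝ (Set.range φ)).topologicalClosure = V) (f : H) :
    HasSum (fun i => ⟪f, φ i⟫ • φ i) (V.orthogonalProjectionOnto f : H) := by
  have hmem : ∀ i, φ i ∈ V := fun i =>
    hspan ▸ Submodule.le_topologicalClosure _ (Submodule.subset_span (Set.mem_range_self i))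
  let ψ : ι → V := fun i => ⟨φ i, hmem i⟩
  have hψ : Orthonormal ℝ ψ := hφ.codRestrict V hmem
  have hdense : ⊤ ≤ (Submodule.span ℝ (Set.range ψ)).topologicalClosure := by
    intro v _
    have hmap :
        (Submodule.span ℝ (Set.range ψ)).map V.subtype = Submodule.span ℝ (Set.range φ) := by
      rw [Submodule.map_span, ← Set.range_comp]; rfl
    show v ∈ closure (Submodule.span ℝ (Set.range ψ) : Set V)
    rw [Topology.IsInducing.subtypeVal.closure_eq_preimage_closure_image]
    show (v : H) ∈ closure ((Submodule.span ℝ (Set.range ψ)).map V.subtype : Set H)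
    rw [hmap]
    exact hspan.symm ▸ v.2
  have h := (HilbertBasis.mk hψ hdense).hasSum_orthogonalProjectionOnto f
  rw [HilbertBasis.coe_mk] at h
  simpa [ψ, real_inner_comm] using h.mapL V.subtypeL

end Orthonormal

section ResidualPolynomial

noncomputable def residualPoly (lam : ℕ → ℝ) (m : ℕ) : ℝ[X] :=
  ∏ i ∈ Finset.range m, (1 - C (lam i)⁻¹ * X)

variable (lam : ℕ → ℝ) (m : ℕ)

theorem eval_residualPoly (t : ℝ) :
    (residualPoly lam m).eval t = ∏ i ∈ Finset.range m, (1 - (lam i)⁻¹ * t) := by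
  simp [residualPoly, eval_prod]

theorem coeff_zero_residualPoly : (residualPoly lam m).coeff 0 = 1 := by
  simp [coeff_zero_eq_eval_zero, eval_residualPoly]

theorem natDegree_residualPoly_le : (residualPoly lam m).natDegree ≤ m := by
  refine (natDegree_prod_le _ _).trans ?_
  have h : ∀ i ∈ Finset.range m, (1 - C (lam i)⁻¹ * X).natDegree ≤ 1 := fun i _ =>
    (natDegree_sub_le _ _).trans (max_le (by simp) ((natDegree_C_mul_le _ _).trans natDegree_X_le))
  simpa using Finset.sum_le_card_nsmul _ _ 1 h

theorem eval_residualPoly_of_lt {i : ℕ} (hi : i < m) (hlam : lam i ≠ 0) :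
    (residualPoly lam m).eval (lam i) = 0 := by
  rw [eval_residualPoly]
  exact Finset.prod_eq_zero (Finset.mem_range.mpr hi) (by rw [inv_mul_cancel₀ hlam, sub_self])

theorem abs_eval_residualPoly_le_one {t : ℝ} (ht : 0 ≤ t) (hle : ∀ j < m, t ≤ lam j) :
    |(residualPoly lam m).eval t| ≤ 1 := by
  have hfac : ∀ j ∈ Finset.range m, 0 ≤ 1 - (lam j)⁻¹ * t ∧ 1 - (lam j)⁻¹ * t ≤ 1 := by
    intro j hj
    have hj := hle j (Finset.mem_range.mp hj)
    rw [inv_mul_eq_div]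
    exact ⟨sub_nonneg.mpr (div_le_one_of_le₀ hj (ht.trans hj)),
      sub_le_self _ (div_nonneg ht (ht.trans hj))⟩
  rw [eval_residualPoly, abs_of_nonneg (Finset.prod_nonneg fun j hj => (hfac j hj).1)]
  exact Finset.prod_le_one (fun j hj => (hfac j hj).1) (fun j hj => (hfac j hj).2)

theorem degree_neg_divX_residualPoly_le : (-(residualPoly lam m).divX).degree ≤ (m - 1 : ℕ) := by
  refine degree_le_of_natDegree_le ?_
  rw [natDegree_neg, natDegree_divX_eq_natDegree_tsub_one]
  exact Nat.sub_le_sub_right (natDegree_residualPoly_le lam m) 1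

end ResidualPolynomial

theorem stmt2_general
    {H : Type*} [NormedAddCommGroup H] [InnerProductSpace ℝ H] [CompleteSpace H]
    (K : H →L[ℝ] H) (hKsa : IsSelfAdjoint K)
    (V : Submodule ℝ H) (hV : V = (LinearMap.range (K : H →ₗ[ℝ] H)).topologicalClosure) [CompleteSpace V]
    (φ : ℕ → H) (hON : Orthonormal ℝ φ)
    (hspan : (Submodule.span ℝ (Set.range φ)).topologicalClosure = V)
    (lam : ℕ → ℝ) (heig : ∀ i, K (φ i) = lam i • φ i)
    (hdec : ∀ i j, i ≤ j → lam j ≤ lam i) (hpos : ∀ i, 0 < lam i)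
    (f : H) (m : ℕ) :
    ∃ q : Polynomial ℝ, q.degree ≤ (m - 1 : ℕ) ∧
      ‖(Submodule.orthogonalProjectionOnto V f : H) - K (Polynomial.aeval K q f)‖
          ≤ ‖(Submodule.orthogonalProjectionOnto V f : H) - ∑ i ∈ Finset.range m, ⟪f, φ i⟫ • φ i‖ ∧
        ‖(Submodule.orthogonalProjectionOnto V f : H) - ∑ i ∈ Finset.range m, ⟪f, φ i⟫ • φ i‖
          = Real.sqrt (∑' i : ℕ, ⟪f, φ (m + i)⟫ ^ 2) := by
  set x : H := (V.orthogonalProjectionOnto f : H)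
  set p := residualPoly lam m
  have hx : HasSum (fun i => ⟪f, φ i⟫ • φ i) x := hON.hasSum_orthogonalProjectionOnto hspan f
  have hKfx : K (f - x) = 0 := by
    have h : f - x ∈ Vᗮ := V.sub_starProjection_mem_orthogonal f
    rwa [hV, Submodule.orthogonal_closure, hKsa.isSymmetric.orthogonal_range] at h
  have hφtail : Orthonormal ℝ (fun i => φ (i + m)) := hON.comp _ (add_left_injective m)
  have htail : HasSum (fun i => ⟪f, φ (i + m)⟫ • φ (i + m))
      (x - ∑ i ∈ Finset.range m, ⟪f, φ i⟫ • φ i) :=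
    (hasSum_nat_add_iff' m).mpr hx
  have hpx : HasSum (fun i => (⟪f, φ i⟫ * p.eval (lam i)) • φ i) (aeval K p x) := by
    simpa [K.aeval_apply_of_apply_eq_smul (heig _), smul_smul] using hx.mapL (aeval K p)
  have hpx_head : ∑ i ∈ Finset.range m, (⟪f, φ i⟫ * p.eval (lam i)) • φ i = 0 :=
    Finset.sum_eq_zero fun i hi => by
      rw [eval_residualPoly_of_lt lam m (Finset.mem_range.mp hi) (hpos i).ne', mul_zero, zero_smul]
  have hpx_tail : HasSum (fun i => (⟪f, φ (i + m)⟫ * p.eval (lam (i + m))) • φ (i + m))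
      (aeval K p x) := by
    simpa [hpx_head] using (hasSum_nat_add_iff' m).mpr hpx
  refine ⟨-p.divX, degree_neg_divX_residualPoly_le lam m, ?_, ?_⟩
  · rw [K.sub_apply_aeval_neg_divX (coeff_zero_residualPoly lam m) hKfx]
    refine hφtail.norm_le_of_hasSum hpx_tail htail fun i => ?_
    rw [abs_mul]
    exact mul_le_of_le_one_right (abs_nonneg _)
      (abs_eval_residualPoly_le_one lam m (hpos _).le fun j hj => hdec j (i + m) (by omega))
  · simp_rw [add_comm m]
    rw [(hφtail.hasSum_sq_of_hasSum htail).tsum_eq, Real.sqrt_sq (norm_nonneg _)]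

/-- For every `f ∈ H` and every `m ≥ 1` there is a real polynomial `q` of degree at most
`m − 1` with `‖P f − K q(K) f‖ ≤ ‖P f − Σ_{i<m} ⟨f, φ_i⟩ φ_i‖ = (Σ_{i≥m} ⟨f, φ_i⟩²)^{1/2}`:
the `m`-th conjugate-gradient (population kernel PLS) approximation is at least as close to
`P f` as the projection of `f` onto the first `m` principal components of `K`. -/
theorem stmt2
    {H : Type*} [NormedAddCommGroup H] [InnerProductSpace ℝ H] [CompleteSpace H]
    [SecondCountableTopology H]
    (K : H →L[ℝ] H) (hKsa : IsSelfAdjoint K) (hKpos : ∀ x, 0 ≤ ⟪K x, x⟫)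
    (V : Submodule ℝ H) (hV : V = (LinearMap.range (K : H →ₗ[ℝ] H)).topologicalClosure) [CompleteSpace V]
    (φ : ℕ → H) (hON : Orthonormal ℝ φ)
    (hspan : (Submodule.span ℝ (Set.range φ)).topologicalClosure = V)
    (lam : ℕ → ℝ) (heig : ∀ i, K (φ i) = lam i • φ i)
    (hdec : ∀ i j, i ≤ j → lam j ≤ lam i) (hpos : ∀ i, 0 < lam i)
    (f : H) (m : ℕ) (hm : 1 ≤ m) :
    ∃ q : Polynomial ℝ, q.degree ≤ (m - 1 : ℕ) ∧
      ‖(Submodule.orthogonalProjectionOnto V f : H) - K (Polynomial.aeval K q f)‖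
          ≤ ‖(Submodule.orthogonalProjectionOnto V f : H) - ∑ i ∈ Finset.range m, ⟪f, φ i⟫ • φ i‖ ∧
        ‖(Submodule.orthogonalProjectionOnto V f : H) - ∑ i ∈ Finset.range m, ⟪f, φ i⟫ • φ i‖
          = Real.sqrt (∑' i : ℕ, ⟪f, φ (m + i)⟫ ^ 2) :=
  stmt2_general K hKsa V hV φ hON hspan lam heig hdec hpos f m
end

section
/- For every f ∈ H, the infimum over real polynomials q of degree at most m−1 of ‖P f − K q(K) f‖ tends to 0 as m → ∞; in particular the population kernel PLS approximations K q_m(K) f converge to P f in H. -/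
/-!
The vectors `K q(K) f` are exactly the elements of the cyclic subspace of `K f`, so it suffices
that `P f` lies in the closure `W` of that subspace. Since `f - P f ∈ (range K)ᗮ = ker K`, we have
`K (P f) = K f ∈ W`. For a self-adjoint `K`, a closed `K`-invariant subspace containing `K g`
must contain every `g ∈ closure (range K)`: the component of `g` orthogonal to `W` is sent by `K`
into `W ∩ Wᗮ = 0`, so it lies in `ker K ⊥ range K` and is orthogonal to `g` as well as to `W`.
-/

open scoped RealInnerProductSpace

open Polynomial Filter Topology

section

variable {𝕜 E : Type*} [NormedField 𝕜] [NormedAddCommGroup E] [NormedSpace 𝕜 E]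

def cyclicSubspace (T : E →L[𝕜] E) (y : E) : Submodule 𝕜 E where
  carrier := {z | ∃ q : 𝕜[X], aeval T q y = z}
  add_mem' := by
    rintro _ _ ⟨p, rfl⟩ ⟨q, rfl⟩
    exact ⟨p + q, by simp⟩
  zero_mem' := ⟨0, by simp⟩
  smul_mem' := by
    rintro c _ ⟨q, rfl⟩
    exact ⟨c • q, by simp⟩

theorem aeval_apply_comm (T : E →L[𝕜] E) (q : 𝕜[X]) (x : E) :
    aeval T q (T x) = T (aeval T q x) := by
  simpa using congr_arg (fun p => aeval T p x) (mul_comm q X)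

theorem self_mem_cyclicSubspace (T : E →L[𝕜] E) (y : E) : y ∈ cyclicSubspace T y :=
  ⟨1, by simp⟩

theorem mapsTo_cyclicSubspace (T : E →L[𝕜] E) (y : E) :
    Set.MapsTo T (cyclicSubspace T y) (cyclicSubspace T y) := by
  rintro _ ⟨q, rfl⟩
  exact ⟨X * q, by simp⟩

theorem mapsTo_closure_cyclicSubspace (T : E →L[𝕜] E) (y : E) :
    Set.MapsTo T (cyclicSubspace T y).topologicalClosure (cyclicSubspace T y).topologicalClosure :=
  fun _ hz => map_mem_closure T.continuous hz (mapsTo_cyclicSubspace T y)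

theorem tendsto_sInf_norm_sub_apply_aeval {T : E →L[𝕜] E} {x y : E}
    (hy : y ∈ (cyclicSubspace T (T x)).topologicalClosure) :
    Tendsto (fun m : ℕ => sInf {r : ℝ | ∃ q : 𝕜[X], q.degree < (m : WithBot ℕ) ∧
      r = ‖y - T (aeval T q x)‖}) atTop (𝓝 0) := by
  rw [Metric.tendsto_atTop]
  intro ε hε
  obtain ⟨_, ⟨q, rfl⟩, hq⟩ := Metric.mem_closure_iff.mp hy ε hε
  refine ⟨q.natDegree + 1, fun m hm => ?_⟩
  have hq_deg : q.degree < (m : WithBot ℕ) :=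
    q.degree_le_natDegree.trans_lt (by exact_mod_cast hm)
  have h_nonneg : ∀ r ∈ {r : ℝ | ∃ q : 𝕜[X], q.degree < (m : WithBot ℕ) ∧
      r = ‖y - T (aeval T q x)‖}, 0 ≤ r := by
    rintro _ ⟨p, -, rfl⟩
    exact norm_nonneg _
  rw [Real.dist_0_eq_abs, abs_of_nonneg (Real.sInf_nonneg h_nonneg)]
  calc _ ≤ ‖y - T (aeval T q x)‖ := csInf_le ⟨0, h_nonneg⟩ ⟨q, hq_deg, rfl⟩
    _ < ε := by rwa [← aeval_apply_comm, ← dist_eq_norm]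

end

section

variable {𝕜 E : Type*} [RCLike 𝕜] [NormedAddCommGroup E] [InnerProductSpace 𝕜 E] [CompleteSpace E]
  {T : E →L[𝕜] E}

theorem IsSelfAdjoint.ker_eq_orthogonal_closure_range (hT : IsSelfAdjoint T) :
    LinearMap.ker (T : E →ₗ[𝕜] E) = (LinearMap.range (T : E →ₗ[𝕜] E)).topologicalClosureᗮ := by
  rw [Submodule.orthogonal_closure, T.orthogonal_range, hT.adjoint_eq]

theorem IsSelfAdjoint.apply_starProjection_closure_range (hT : IsSelfAdjoint T)
    [(LinearMap.range (T : E →ₗ[𝕜] E)).topologicalClosure.HasOrthogonalProjection] (x : E) :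
    T ((LinearMap.range (T : E →ₗ[𝕜] E)).topologicalClosure.starProjection x) = T x := by
  have hx : x - (LinearMap.range (T : E →ₗ[𝕜] E)).topologicalClosure.starProjection x ∈
      LinearMap.ker (T : E →ₗ[𝕜] E) := by
    rw [hT.ker_eq_orthogonal_closure_range]
    exact Submodule.sub_starProjection_mem_orthogonal x
  rw [LinearMap.mem_ker, ContinuousLinearMap.coe_coe, map_sub, sub_eq_zero] at hx
  exact hx.symm

theorem IsSelfAdjoint.mem_of_mapsTo_of_apply_mem (hT : IsSelfAdjoint T) {W : Submodule 𝕜 E}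
    [W.HasOrthogonalProjection] (hW : Set.MapsTo T W W) {g : E}
    (hg : g ∈ (LinearMap.range (T : E →ₗ[𝕜] E)).topologicalClosure) (hTg : T g ∈ W) :
    g ∈ W := by
  set h := g - W.starProjection g
  have hh : h ∈ Wᗮ := W.sub_starProjection_mem_orthogonal g
  have hTh_mem : T h ∈ W := by
    rw [map_sub]
    exact W.sub_mem hTg (hW (W.starProjection_apply_mem g))
  have hTh_orth : T h ∈ Wᗮ := fun w hw => by
    rw [← hT.adjoint_eq, ContinuousLinearMap.adjoint_inner_right]
    exact hh _ (hW hw)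
  have hTh : T h = 0 := by
    simpa [W.inf_orthogonal_eq_bot] using Submodule.mem_inf.mpr ⟨hTh_mem, hTh_orth⟩
  have hh_ker : h ∈ (LinearMap.range (T : E →ₗ[𝕜] E)).topologicalClosureᗮ := by
    rw [← hT.ker_eq_orthogonal_closure_range]
    exact hTh
  have hh_zero : h = 0 := by
    rw [← inner_self_eq_zero (𝕜 := 𝕜)]
    calc inner 𝕜 h h = inner 𝕜 g h - inner 𝕜 (W.starProjection g) h := inner_sub_left _ _ _
      _ = 0 := by rw [hh_ker g hg, hh _ (W.starProjection_apply_mem g), sub_zero]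
  rwa [sub_eq_zero, eq_comm, Submodule.starProjection_eq_self_iff] at hh_zero

end

theorem stmt3_general
    {H : Type*} [NormedAddCommGroup H] [InnerProductSpace ℝ H] [CompleteSpace H]
    (K : H →L[ℝ] H) (hKsa : IsSelfAdjoint K)
    (V : Submodule ℝ H) (hV : V = (LinearMap.range (K : H →ₗ[ℝ] H)).topologicalClosure) [CompleteSpace V]
    (f : H) :
    Filter.Tendsto
      (fun m : ℕ =>
        sInf {r : ℝ | ∃ q : Polynomial ℝ, q.degree < (m : WithBot ℕ) ∧
          r = ‖(V.orthogonalProjectionOnto f : H) - K (Polynomial.aeval K q f)‖})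
      Filter.atTop (nhds 0) := by
  subst hV
  simp_rw [Submodule.coe_orthogonalProjectionOnto_apply]
  refine tendsto_sInf_norm_sub_apply_aeval (hKsa.mem_of_mapsTo_of_apply_mem
    (mapsTo_closure_cyclicSubspace K (K f)) (Submodule.starProjection_apply_mem _ f) ?_)
  rw [hKsa.apply_starProjection_closure_range]
  exact Submodule.le_topologicalClosure _ (self_mem_cyclicSubspace K (K f))

/-- For every `f ∈ H`, the infimum over real polynomials `q` of degree at most `m − 1` of
`‖P f − K q(K) f‖` tends to `0` as `m → ∞`: the population kernel PLS approximations
`K q_m(K) f` converge to `P f` in `H`. -/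
theorem stmt3
    {H : Type*} [NormedAddCommGroup H] [InnerProductSpace ℝ H] [CompleteSpace H]
    [SecondCountableTopology H]
    (K : H →L[ℝ] H) (hKsa : IsSelfAdjoint K) (hKpos : ∀ x, 0 ≤ ⟪K x, x⟫)
    (V : Submodule ℝ H) (hV : V = (LinearMap.range (K : H →ₗ[ℝ] H)).topologicalClosure) [CompleteSpace V]
    (φ : ℕ → H) (hON : Orthonormal ℝ φ)
    (hspan : (Submodule.span ℝ (Set.range φ)).topologicalClosure = V)
    (lam : ℕ → ℝ) (heig : ∀ i, K (φ i) = lam i • φ i)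
    (hdec : ∀ i j, i ≤ j → lam j ≤ lam i) (hpos : ∀ i, 0 < lam i)
    (f : H) :
    Filter.Tendsto
      (fun m : ℕ =>
        sInf {r : ℝ | ∃ q : Polynomial ℝ, q.degree < (m : WithBot ℕ) ∧
          r = ‖(V.orthogonalProjectionOnto f : H) - K (Polynomial.aeval K q f)‖})
      Filter.atTop (nhds 0) :=
  stmt3_general K hKsa V hV f
end

section
/- Let H be a real separable Hilbert space, n ≥ 2, and X_1, …, X_n independent identically distributed H-valued (Bochner integrable) random variables with ‖X_i‖ ≤ 1 almost surely. Set ε_n = 4 √((log n)/n). Then with probability at least 1 − n⁻² one has ‖(1/n) Σ_{i=1}^n X_i − E[X_1]‖ ≤ ε_n. -/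
/-
Exponential moments of the squared norm. If `Z` is centred with `‖Z‖ ≤ 2` and `E ‖Z‖² ≤ 1`,
expanding `‖s + Z‖² = ‖s‖² + 2⟪s, Z⟫ + ‖Z‖²` and using `eˣ ≤ 1 + x + (163/200) x²` for `x ≤ 6/5`
gives `E exp (l ‖s + Z‖²) ≤ exp ((l + 17/4 l²) ‖s‖² + l + 15 l²)` as long as `4 l (‖s‖ + 1) ≤ 6/5`.
Adding the centred summands one at a time (independence lets us integrate the new one first) and
lowering the rate along `λₘ = 12 / (29 n + 51 m)`, which absorbs the factor `1 + 17/4 λ`, yields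
`E exp (λₙ ‖Sₙ‖²) ≤ exp (n (λ₀ + 15 λ₀²))`. The exponential Chebyshev inequality at
`‖Sₙ‖² = 16 n log n` then bounds the tail by `n⁻²` once `n ≥ 8`; for `n ≤ 7` the deviation is at
most `2 ≤ ε_n` almost surely.
-/

open MeasureTheory ProbabilityTheory Real
open scoped ENNReal

lemma exp_le_one_add_add_mul_sq_of_le {x : ℝ} (hx : x ≤ 6 / 5) :
    exp x ≤ 1 + x + 163 / 200 * x ^ 2 := by
  rcases le_or_gt x (-1) with hx₁ | hx₁
  · have : exp (-1) ≤ 0.37 := by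
      rw [exp_neg, inv_le_iff_one_le_mul₀ (exp_pos 1)]
      nlinarith [exp_one_gt_d9]
    nlinarith [exp_le_exp.2 hx₁]
  rcases le_or_gt x 0 with hx₀ | hx₀
  · have hb := exp_bound (x := x) (abs_le.2 ⟨hx₁.le, by linarith⟩) (n := 3) (by norm_num)
    norm_num [Finset.sum_range_succ, Nat.factorial, abs_of_nonpos hx₀] at hb
    nlinarith [(abs_le.1 hb).2]
  · -- halving brings `x` into `[0, 1]`, where the cubic Taylor bound applies; then square
    set t := x / 2 with ht
    have ht₀ : 0 ≤ t := by positivity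
    have ht₁ : t ≤ 3 / 5 := by linarith
    have hb := exp_bound (x := t) (abs_le.2 ⟨by linarith, by linarith⟩) (n := 3) (by norm_num)
    norm_num [Finset.sum_range_succ, Nat.factorial, abs_of_nonneg ht₀] at hb
    have hcubic : exp t ≤ 1 + t + t ^ 2 / 2 + 2 / 9 * t ^ 3 := by nlinarith [(abs_le.1 hb).2]
    have hsq : exp x = exp t ^ 2 := by rw [← exp_nat_mul]; congr 1; push_cast; ring
    have hquartic : (1 + t + t ^ 2 / 2 + 2 / 9 * t ^ 3) ^ 2 ≤ 1 + 2 * t + 163 / 50 * t ^ 2 := by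
      have h3 : t ^ 3 ≤ (3 / 5) ^ 3 := pow_le_pow_left₀ ht₀ ht₁ 3
      have h2 : t ^ 2 ≤ (3 / 5) ^ 2 := pow_le_pow_left₀ ht₀ ht₁ 2
      nlinarith [mul_le_mul_of_nonneg_left ht₁ (sq_nonneg t),
        mul_le_mul_of_nonneg_left h2 (sq_nonneg t), mul_le_mul_of_nonneg_left h3 (sq_nonneg t),
        mul_le_mul_of_nonneg_left (pow_le_pow_left₀ ht₀ ht₁ 4) (sq_nonneg t)]
    rw [hsq, show x = 2 * t by ring]
    nlinarith [mul_le_mul hcubic hcubic (exp_pos t).le (by positivity)]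

noncomputable def expMomentRate (n m : ℕ) : ℝ := 12 / (29 * n + 51 * m)

lemma expMomentRate_nonneg (n m : ℕ) : 0 ≤ expMomentRate n m := by
  unfold expMomentRate; positivity

lemma expMomentRate_succ_add_sq_le {n m : ℕ} (hmn : m < n) :
    expMomentRate n (m + 1) + 17 / 4 * expMomentRate n (m + 1) ^ 2 ≤ expMomentRate n m := by
  unfold expMomentRate
  set a : ℝ := 29 * n + 51 * m
  have ha : 0 < a := by
    have : (0 : ℝ) < n := by exact_mod_cast hmn.trans_le' (Nat.zero_le m)
    positivity
  have hsucc : (29 * n + 51 * (m + 1 : ℕ) : ℝ) = a + 51 := by push_cast; ring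
  have hlhs : 12 / (a + 51) + 17 / 4 * (12 / (a + 51)) ^ 2 = (12 * a + 1224) / (a + 51) ^ 2 := by
    field_simp; ring
  rw [hsucc, hlhs, div_le_div_iff₀ (by positivity) ha]
  nlinarith

lemma four_mul_expMomentRate_succ_mul_le {n m : ℕ} (hmn : m < n) :
    4 * expMomentRate n (m + 1) * (2 * m + 1) ≤ 6 / 5 := by
  unfold expMomentRate
  have : (m : ℝ) + 1 ≤ n := by exact_mod_cast hmn
  rw [mul_comm 4, div_mul_eq_mul_div, div_mul_eq_mul_div, div_le_iff₀ (by positivity)]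
  push_cast
  nlinarith

lemma expMomentRate_le_expMomentRate_zero {n : ℕ} (hn : 0 < n) (m : ℕ) :
    expMomentRate n m ≤ expMomentRate n 0 := by
  unfold expMomentRate
  gcongr
  simp

lemma two_le_log_of_eight_le {n : ℕ} (hn : 8 ≤ n) : 2 ≤ log n := by
  rw [le_log_iff_exp_le (by positivity), show (2 : ℝ) = 1 + 1 by norm_num, exp_add]
  have : (8 : ℝ) ≤ n := by exact_mod_cast hn
  nlinarith [exp_one_lt_d9, exp_pos 1]

lemma card_mul_expMomentRate_sub_le {n : ℕ} (hn : 8 ≤ n) :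
    n * (expMomentRate n 0 + 15 * expMomentRate n 0 ^ 2)
      - expMomentRate n n * (16 * (n * log n)) ≤ -2 * log n := by
  unfold expMomentRate
  have hn' : (8 : ℝ) ≤ n := by exact_mod_cast hn
  have hlog := two_le_log_of_eight_le hn
  have h₁ : (n : ℝ) * (12 / (29 * n + 51 * 0) + 15 * (12 / (29 * n + 51 * 0)) ^ 2)
      = 12 / 29 + 2160 / 841 / n := by
    field_simp; ring
  have h₂ : 12 / (29 * n + 51 * n) * (16 * (n * log n)) = 12 / 5 * log n := by
    field_simp; ring
  have h₃ : 2160 / 841 / (n : ℝ) ≤ 2160 / 841 / 8 := by gcongr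
  rw [Nat.cast_zero, h₁, h₂]
  linarith

lemma two_le_four_mul_sqrt_log_div {n : ℕ} (h₂ : 2 ≤ n) (h₇ : n ≤ 7) :
    2 ≤ 4 * √(log n / n) := by
  have hn₀ : (0 : ℝ) < n := by positivity
  have hexp : exp n ≤ (n : ℝ) ^ 4 := by
    rw [← exp_one_pow]
    calc exp 1 ^ n ≤ 2.7182818286 ^ n := by gcongr; exact exp_one_lt_d9.le
      _ ≤ (n : ℝ) ^ 4 := by interval_cases n <;> norm_num
  have hlog : (n : ℝ) ≤ 4 * log n := by
    have := (le_log_iff_exp_le (by positivity)).2 hexp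
    rwa [log_pow, Nat.cast_ofNat] at this
  have : 1 / 2 ≤ √(log n / n) := by
    rw [le_sqrt (by norm_num) (by positivity), le_div_iff₀ hn₀]
    linarith
  linarith

section

variable {Ω : Type*} {mΩ : MeasurableSpace Ω} {μ : Measure Ω}
  {H : Type*} [NormedAddCommGroup H]

lemma ae_norm_sum_le {ι : Type*} [Countable ι] {Z : ι → Ω → H} {b : ℝ}
    (hZb : ∀ i, ∀ᵐ ω ∂μ, ‖Z i ω‖ ≤ b) (s : Finset ι) :
    ∀ᵐ ω ∂μ, ‖∑ i ∈ s, Z i ω‖ ≤ s.card * b := by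
  filter_upwards [ae_all_iff.2 hZb] with ω hω
  simpa using norm_sum_le_of_le s fun i _ ↦ hω i

lemma measure_lt_norm_inv_card_smul_sum_sub_eq_zero [NormedSpace ℝ H] {ι : Type*} [Fintype ι]
    {X : ι → Ω → H} (h₂ : 2 ≤ Fintype.card ι) (h₇ : Fintype.card ι ≤ 7)
    (hXb : ∀ i, ∀ᵐ ω ∂μ, ‖X i ω‖ ≤ 1) {m : H} (hm : ‖m‖ ≤ 1) :
    μ {ω | 4 * √(log (Fintype.card ι) / Fintype.card ι)
      < ‖(Fintype.card ι : ℝ)⁻¹ • ∑ i, X i ω - m‖} = 0 := by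
  set n := Fintype.card ι
  have hn₀ : (0 : ℝ) < n := by positivity
  simp only [← not_le]
  refine ae_iff.1 ?_
  filter_upwards [ae_norm_sum_le hXb Finset.univ] with ω hω
  have : ‖(n : ℝ)⁻¹ • ∑ i, X i ω‖ ≤ 1 := by
    rw [norm_smul, norm_inv, Real.norm_natCast, inv_mul_le_iff₀ hn₀]
    simpa using hω
  linarith [norm_sub_le ((n : ℝ)⁻¹ • ∑ i, X i ω) m, two_le_four_mul_sqrt_log_div h₂ h₇]

variable [IsProbabilityMeasure μ]

lemma one_sub_le_measure_of_measure_compl_le {s : Set Ω} {p : ℝ≥0∞} (h : μ sᶜ ≤ p) :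
    1 - p ≤ μ s := by
  rw [tsub_le_iff_right]
  calc 1 = μ (s ∪ sᶜ) := by simp
    _ ≤ μ s + μ sᶜ := measure_union_le _ _
    _ ≤ μ s + p := by gcongr

lemma ProbabilityTheory.IndepFun.integral_comp_eq_integral_integral {α β : Type*}
    [MeasurableSpace α] [MeasurableSpace β] {S : Ω → α} {Z : Ω → β} (hSZ : IndepFun S Z μ)
    (hS : Measurable S) (hZ : Measurable Z) {f : α → β → ℝ} (hf : Measurable (Function.uncurry f))
    (hfi : Integrable (fun ω ↦ f (S ω) (Z ω)) μ) :
    ∫ ω, f (S ω) (Z ω) ∂μ = ∫ ω, ∫ ω', f (S ω) (Z ω') ∂μ ∂μ := by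
  have hpair : Measurable fun ω ↦ (S ω, Z ω) := hS.prodMk hZ
  have hmap := (indepFun_iff_map_prod_eq_prod_map_map hS.aemeasurable hZ.aemeasurable).1 hSZ
  have hprod : Integrable (Function.uncurry f) ((μ.map S).prod (μ.map Z)) := by
    rw [← hmap, integrable_map_measure hf.aestronglyMeasurable hpair.aemeasurable]
    exact hfi
  calc ∫ ω, f (S ω) (Z ω) ∂μ = ∫ p, Function.uncurry f p ∂((μ.map S).prod (μ.map Z)) := by
        rw [← hmap, integral_map hpair.aemeasurable hf.aestronglyMeasurable]; rfl
    _ = ∫ s, ∫ z, f s z ∂(μ.map Z) ∂(μ.map S) := integral_prod _ hprod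
    _ = ∫ ω, ∫ ω', f (S ω) (Z ω') ∂μ ∂μ := by
        rw [integral_map hS.aemeasurable (f := fun s ↦ ∫ z, f s z ∂(μ.map Z))
          hprod.integral_prod_left.aestronglyMeasurable]
        congr with ω
        exact integral_map hZ.aemeasurable
          (hf.comp measurable_prodMk_left).aestronglyMeasurable

lemma integrable_exp_mul_norm_sq_of_bound {Y : Ω → H} (hY : AEStronglyMeasurable Y μ)
    {B : ℝ} (hYB : ∀ᵐ ω ∂μ, ‖Y ω‖ ≤ B) {c : ℝ} (hc : 0 ≤ c) :
    Integrable (fun ω ↦ exp (c * ‖Y ω‖ ^ 2)) μ := by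
  refine .of_bound (by fun_prop) (exp (c * B ^ 2)) ?_
  filter_upwards [hYB] with ω hω
  rw [norm_of_nonneg (exp_pos _).le, exp_le_exp]
  gcongr

lemma integrable_norm_sq_of_bound {Y : Ω → H} (hY : AEStronglyMeasurable Y μ) {B : ℝ}
    (hYB : ∀ᵐ ω ∂μ, ‖Y ω‖ ≤ B) : Integrable (fun ω ↦ ‖Y ω‖ ^ 2) μ := by
  refine .of_bound (by fun_prop) (B ^ 2) ?_
  filter_upwards [hYB] with ω hω
  rw [norm_pow, norm_norm]
  exact pow_le_pow_left₀ (norm_nonneg _) hω 2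

variable [InnerProductSpace ℝ H]

lemma abs_two_inner_add_norm_sq_le {s z : H} (hz : ‖z‖ ≤ 2) :
    |2 * inner ℝ s z + ‖z‖ ^ 2| ≤ 2 * (‖s‖ + 1) * ‖z‖ := by
  have := abs_real_inner_le_norm s z
  rw [abs_le] at this ⊢
  constructor <;> nlinarith [norm_nonneg z, norm_nonneg s]

variable [CompleteSpace H]

lemma integral_exp_mul_two_inner_add_norm_sq_le {Z : Ω → H} (hZ : AEStronglyMeasurable Z μ)
    (hZb : ∀ᵐ ω ∂μ, ‖Z ω‖ ≤ 2) (hZm : μ[Z] = 0) (hZv : ∫ ω, ‖Z ω‖ ^ 2 ∂μ ≤ 1)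
    (s : H) {l : ℝ} (hl : 0 ≤ l) (hsmall : 4 * l * (‖s‖ + 1) ≤ 6 / 5) :
    ∫ ω, exp (l * (2 * inner ℝ s (Z ω) + ‖Z ω‖ ^ 2)) ∂μ
      ≤ 1 + l + 163 / 50 * l ^ 2 * (‖s‖ + 1) ^ 2 := by
  set K := 163 / 50 * l ^ 2 * (‖s‖ + 1) ^ 2 with hK
  have hσ : 0 ≤ ‖s‖ + 1 := by positivity
  have hZi : Integrable Z μ := .of_bound hZ 2 hZb
  have hZ2 := integrable_norm_sq_of_bound hZ hZb
  have hlin : Integrable (fun ω ↦ 1 + 2 * l * inner ℝ s (Z ω)) μ :=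
    (integrable_const 1).add ((hZi.const_inner s).const_mul _)
  have hexponent : ∀ᵐ ω ∂μ, l * (2 * inner ℝ s (Z ω) + ‖Z ω‖ ^ 2) ≤ 6 / 5 := by
    filter_upwards [hZb] with ω hω
    have hW := abs_le.1 (abs_two_inner_add_norm_sq_le (s := s) hω)
    nlinarith [mul_le_mul_of_nonneg_left (mul_le_mul_of_nonneg_left hω hσ) hl]
  have hpointwise : ∀ᵐ ω ∂μ, exp (l * (2 * inner ℝ s (Z ω) + ‖Z ω‖ ^ 2))
      ≤ 1 + 2 * l * inner ℝ s (Z ω) + (l + K) * ‖Z ω‖ ^ 2 := by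
    filter_upwards [hZb, hexponent] with ω hω hle
    have hW := abs_le.1 (abs_two_inner_add_norm_sq_le (s := s) hω)
    have hsq : 163 / 200 * (l * (2 * inner ℝ s (Z ω) + ‖Z ω‖ ^ 2)) ^ 2 ≤ K * ‖Z ω‖ ^ 2 := by
      rw [hK]
      nlinarith [mul_le_mul_of_nonneg_left (sq_le_sq' hW.1 hW.2) (sq_nonneg l)]
    linarith [exp_le_one_add_add_mul_sq_of_le hle]
  calc _ ≤ ∫ ω, (1 + 2 * l * inner ℝ s (Z ω) + (l + K) * ‖Z ω‖ ^ 2) ∂μ := by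
        refine integral_mono_ae (.of_bound (by fun_prop) (exp (6 / 5)) ?_)
          (hlin.add (hZ2.const_mul _)) hpointwise
        filter_upwards [hexponent] with ω hω
        rwa [norm_of_nonneg (exp_pos _).le, exp_le_exp]
    _ = 1 + (l + K) * ∫ ω, ‖Z ω‖ ^ 2 ∂μ := by
        rw [integral_add hlin (hZ2.const_mul _), integral_add (integrable_const 1)
          ((hZi.const_inner s).const_mul _), integral_const_mul, integral_const_mul,
          integral_inner hZi, hZm]
        simp
    _ ≤ 1 + l + K := by nlinarith [show 0 ≤ K by positivity]

lemma integral_exp_mul_norm_add_sq_le {Z : Ω → H} (hZ : AEStronglyMeasurable Z μ)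
    (hZb : ∀ᵐ ω ∂μ, ‖Z ω‖ ≤ 2) (hZm : μ[Z] = 0) (hZv : ∫ ω, ‖Z ω‖ ^ 2 ∂μ ≤ 1)
    (s : H) {l : ℝ} (hl : 0 ≤ l) (hsmall : 4 * l * (‖s‖ + 1) ≤ 6 / 5) :
    ∫ ω, exp (l * ‖s + Z ω‖ ^ 2) ∂μ
      ≤ exp ((l + 17 / 4 * l ^ 2) * ‖s‖ ^ 2 + (l + 15 * l ^ 2)) := by
  have hsplit : ∀ ω, exp (l * ‖s + Z ω‖ ^ 2)
      = exp (l * ‖s‖ ^ 2) * exp (l * (2 * inner ℝ s (Z ω) + ‖Z ω‖ ^ 2)) := by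
    intro ω
    rw [← exp_add, norm_add_sq_real]
    ring_nf
  have hσ : (‖s‖ + 1) ^ 2 ≤ 13 / 10 * ‖s‖ ^ 2 + 13 / 3 := by
    nlinarith [sq_nonneg (3 * ‖s‖ - 10)]
  calc _ = exp (l * ‖s‖ ^ 2) * ∫ ω, exp (l * (2 * inner ℝ s (Z ω) + ‖Z ω‖ ^ 2)) ∂μ := by
        simp_rw [hsplit, integral_const_mul]
    _ ≤ exp (l * ‖s‖ ^ 2) * exp (l + 163 / 50 * l ^ 2 * (‖s‖ + 1) ^ 2) := by
        gcongr
        exact (integral_exp_mul_two_inner_add_norm_sq_le hZ hZb hZm hZv s hl hsmall).trans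
          (by linarith [add_one_le_exp (l + 163 / 50 * l ^ 2 * (‖s‖ + 1) ^ 2)])
    _ ≤ _ := by
        rw [← exp_add, exp_le_exp]
        nlinarith [mul_le_mul_of_nonneg_left hσ (sq_nonneg l),
          mul_nonneg (sq_nonneg l) (sq_nonneg ‖s‖)]

lemma integral_norm_sub_integral_sq_le {X : Ω → H} (hX : AEStronglyMeasurable X μ) {C : ℝ}
    (hXC : ∀ᵐ ω ∂μ, ‖X ω‖ ≤ C) : ∫ ω, ‖X ω - μ[X]‖ ^ 2 ∂μ ≤ C ^ 2 := by
  have hXi : Integrable X μ := .of_bound hX C hXC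
  have hX2 := integrable_norm_sq_of_bound hX hXC
  have hlin : Integrable (fun ω ↦ ‖X ω‖ ^ 2 - 2 * inner ℝ μ[X] (X ω)) μ :=
    hX2.sub ((hXi.const_inner _).const_mul 2)
  calc ∫ ω, ‖X ω - μ[X]‖ ^ 2 ∂μ
      = ∫ ω, (‖X ω‖ ^ 2 - 2 * inner ℝ μ[X] (X ω) + ‖μ[X]‖ ^ 2) ∂μ := by
        congr with ω
        rw [norm_sub_sq_real, real_inner_comm]
    _ = ∫ ω, ‖X ω‖ ^ 2 ∂μ - ‖μ[X]‖ ^ 2 := by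
        rw [integral_add hlin (integrable_const _),
          integral_sub hX2 ((hXi.const_inner _).const_mul 2), integral_const_mul,
          integral_inner hXi, real_inner_self_eq_norm_sq]
        simp only [integral_const, probReal_univ, one_smul]
        ring
    _ ≤ ∫ _ : Ω, C ^ 2 ∂μ := by
        have := sq_nonneg ‖μ[X]‖
        refine (sub_le_self _ this).trans (integral_mono_ae hX2 (integrable_const _) ?_)
        filter_upwards [hXC] with ω hω
        exact pow_le_pow_left₀ (norm_nonneg _) hω 2
    _ = C ^ 2 := by simp

variable [MeasurableSpace H] [BorelSpace H] [SecondCountableTopology H]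

lemma integral_exp_mul_norm_add_sq_le_of_indepFun {S Z : Ω → H} (hS : Measurable S)
    (hZ : Measurable Z) (hSZ : IndepFun S Z μ)
    (hZb : ∀ᵐ ω ∂μ, ‖Z ω‖ ≤ 2) (hZm : μ[Z] = 0) (hZv : ∫ ω, ‖Z ω‖ ^ 2 ∂μ ≤ 1)
    {B : ℝ} (hSB : ∀ᵐ ω ∂μ, ‖S ω‖ ≤ B) {l : ℝ} (hl : 0 ≤ l) (hsmall : 4 * l * (B + 1) ≤ 6 / 5) :
    ∫ ω, exp (l * ‖S ω + Z ω‖ ^ 2) ∂μ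
      ≤ exp (l + 15 * l ^ 2) * ∫ ω, exp ((l + 17 / 4 * l ^ 2) * ‖S ω‖ ^ 2) ∂μ := by
  have hsum : ∀ᵐ ω ∂μ, ‖S ω + Z ω‖ ≤ B + 2 := by
    filter_upwards [hSB, hZb] with ω h₁ h₂
    exact (norm_add_le _ _).trans (add_le_add h₁ h₂)
  rw [hSZ.integral_comp_eq_integral_integral (f := fun s z ↦ exp (l * ‖s + z‖ ^ 2)) hS hZ
    (by fun_prop) (integrable_exp_mul_norm_sq_of_bound (by fun_prop) hsum hl),
    ← integral_const_mul]
  refine integral_mono_of_nonneg (.of_forall fun ω ↦ integral_nonneg fun _ ↦ (exp_pos _).le)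
    ((integrable_exp_mul_norm_sq_of_bound hS.aestronglyMeasurable hSB
      (by positivity)).const_mul _) ?_
  filter_upwards [hSB] with ω hω
  rw [mul_comm, ← exp_add]
  exact integral_exp_mul_norm_add_sq_le hZ.aestronglyMeasurable hZb hZm hZv (S ω) hl
    (hsmall.trans' (by gcongr))

variable {ι : Type*} [Fintype ι] {Z : ι → Ω → H}

lemma integral_exp_mul_norm_sum_sq_le (hZ : ∀ i, Measurable (Z i)) (hind : iIndepFun Z μ)
    (hZb : ∀ i, ∀ᵐ ω ∂μ, ‖Z i ω‖ ≤ 2) (hZm : ∀ i, μ[Z i] = 0)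
    (hZv : ∀ i, ∫ ω, ‖Z i ω‖ ^ 2 ∂μ ≤ 1) (s : Finset ι) :
    ∫ ω, exp (expMomentRate (Fintype.card ι) s.card * ‖∑ i ∈ s, Z i ω‖ ^ 2) ∂μ
      ≤ exp (s.card * (expMomentRate (Fintype.card ι) 0
          + 15 * expMomentRate (Fintype.card ι) 0 ^ 2)) := by
  classical
  set r := expMomentRate (Fintype.card ι)
  induction s using Finset.induction_on with
  | empty => simp
  | insert i s hi ih =>
    have hcard : s.card < Fintype.card ι := by
      simpa [Finset.card_insert_of_notMem hi] using Finset.card_le_univ (insert i s)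
    have hsum : ∀ ω, ∑ j ∈ insert i s, Z j ω = ∑ j ∈ s, Z j ω + Z i ω := fun ω ↦ by
      rw [Finset.sum_insert hi, add_comm]
    have hindep : IndepFun (fun ω ↦ ∑ j ∈ s, Z j ω) (Z i) μ := by
      simpa [Finset.sum_fn] using hind.indepFun_finsetSum_of_notMem hZ hi
    set l := r (s.card + 1)
    have hl : l + 15 * l ^ 2 ≤ r 0 + 15 * r 0 ^ 2 := by
      have := expMomentRate_le_expMomentRate_zero (hcard.trans_le' (Nat.zero_le _)) (s.card + 1)
      have := expMomentRate_nonneg (Fintype.card ι) (s.card + 1)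
      gcongr
    simp_rw [Finset.card_insert_of_notMem hi, hsum]
    calc ∫ ω, exp (l * ‖∑ j ∈ s, Z j ω + Z i ω‖ ^ 2) ∂μ
        ≤ exp (l + 15 * l ^ 2) * ∫ ω, exp ((l + 17 / 4 * l ^ 2) * ‖∑ j ∈ s, Z j ω‖ ^ 2) ∂μ :=
          integral_exp_mul_norm_add_sq_le_of_indepFun (by fun_prop) (hZ i) hindep (hZb i)
            (hZm i) (hZv i) (ae_norm_sum_le hZb s) (expMomentRate_nonneg _ _)
            (by simpa [mul_comm (s.card : ℝ)] using four_mul_expMomentRate_succ_mul_le hcard)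
      _ ≤ exp (r 0 + 15 * r 0 ^ 2) * exp (s.card * (r 0 + 15 * r 0 ^ 2)) := by
          gcongr
          refine (integral_mono_of_nonneg (.of_forall fun _ ↦ (exp_pos _).le)
            (integrable_exp_mul_norm_sq_of_bound (by fun_prop) (ae_norm_sum_le hZb s)
              (expMomentRate_nonneg _ _)) (.of_forall fun ω ↦ ?_)).trans ih
          dsimp only
          gcongr
          exact expMomentRate_succ_add_sq_le hcard
      _ = exp ((s.card + 1 : ℕ) * (r 0 + 15 * r 0 ^ 2)) := by
          rw [← exp_add]
          push_cast
          ring_nf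

lemma measure_lt_norm_sum_le (hn : 8 ≤ Fintype.card ι) (hZ : ∀ i, Measurable (Z i))
    (hind : iIndepFun Z μ) (hZb : ∀ i, ∀ᵐ ω ∂μ, ‖Z i ω‖ ≤ 2) (hZm : ∀ i, μ[Z i] = 0)
    (hZv : ∀ i, ∫ ω, ‖Z i ω‖ ^ 2 ∂μ ≤ 1) :
    μ {ω | 4 * √(Fintype.card ι * log (Fintype.card ι)) < ‖∑ i, Z i ω‖}
      ≤ ((Fintype.card ι : ℝ≥0∞))⁻¹ ^ 2 := by
  set n := Fintype.card ι
  have hn₀ : (0 : ℝ) < n := by positivity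
  have hlog : 0 ≤ log n := (two_le_log_of_eight_le hn).trans' zero_le_two
  have hsubset : {ω | 4 * √(n * log n) < ‖∑ i, Z i ω‖}
      ⊆ {ω | 16 * (n * log n) ≤ ‖∑ i, Z i ω‖ ^ 2} := by
    intro ω (hω : 4 * √(n * log n) < ‖∑ i, Z i ω‖)
    have := pow_le_pow_left₀ (by positivity) hω.le 2
    rw [mul_pow, sq_sqrt (by positivity)] at this
    exact this.trans' (by norm_num)
  have hmgf := integral_exp_mul_norm_sum_sq_le hZ hind hZb hZm hZv Finset.univ
  rw [Finset.card_univ] at hmgf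
  have hchernoff := measure_ge_le_exp_mul_mgf (μ := μ) (X := fun ω ↦ ‖∑ i, Z i ω‖ ^ 2)
    (16 * (n * log n)) (expMomentRate_nonneg n n)
    (integrable_exp_mul_norm_sq_of_bound (by fun_prop) (ae_norm_sum_le hZb _)
      (expMomentRate_nonneg n n))
  have hreal : μ.real {ω | 16 * (n * log n) ≤ ‖∑ i, Z i ω‖ ^ 2} ≤ ((n : ℝ)⁻¹) ^ 2 :=
    calc _ ≤ exp (-expMomentRate n n * (16 * (n * log n)))
            * exp (n * (expMomentRate n 0 + 15 * expMomentRate n 0 ^ 2)) := by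
          exact hchernoff.trans (by gcongr; exact hmgf)
      _ ≤ exp (-2 * log n) := by
          rw [← exp_add, exp_le_exp]
          linarith [card_mul_expMomentRate_sub_le hn]
      _ = ((n : ℝ)⁻¹) ^ 2 := by
          rw [neg_mul, exp_neg, show 2 * log n = log ((n : ℝ) ^ 2) by rw [log_pow]; norm_num,
            exp_log (by positivity), inv_pow]
  calc _ ≤ μ {ω | 16 * (n * log n) ≤ ‖∑ i, Z i ω‖ ^ 2} := measure_mono hsubset
    _ = ENNReal.ofReal (μ.real {ω | 16 * (n * log n) ≤ ‖∑ i, Z i ω‖ ^ 2}) :=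
        (ofReal_measureReal (measure_ne_top _ _)).symm
    _ ≤ ENNReal.ofReal (((n : ℝ)⁻¹) ^ 2) := ENNReal.ofReal_le_ofReal hreal
    _ = ((n : ℝ≥0∞))⁻¹ ^ 2 := by
        rw [ENNReal.ofReal_pow (by positivity), ENNReal.ofReal_inv_of_pos hn₀,
          ENNReal.ofReal_natCast]

lemma measure_lt_norm_inv_card_smul_sum_sub_le {X : ι → Ω → H} (hn : 8 ≤ Fintype.card ι)
    (hX : ∀ i, Measurable (X i)) (hind : iIndepFun X μ) (hXb : ∀ i, ∀ᵐ ω ∂μ, ‖X i ω‖ ≤ 1)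
    {m : H} (hXm : ∀ i, μ[X i] = m) :
    μ {ω | 4 * √(log (Fintype.card ι) / Fintype.card ι)
      < ‖(Fintype.card ι : ℝ)⁻¹ • ∑ i, X i ω - m‖} ≤ ((Fintype.card ι : ℝ≥0∞))⁻¹ ^ 2 := by
  set n := Fintype.card ι
  have hn₀ : (0 : ℝ) < n := by positivity
  have hm : ∀ i, ‖m‖ ≤ 1 := fun i ↦ by
    simpa [hXm i] using norm_integral_le_of_norm_le_const (hXb i)
  set Z : ι → Ω → H := fun i ω ↦ X i ω - m
  have hcenter : ∀ ω, (n : ℝ)⁻¹ • ∑ i, X i ω - m = (n : ℝ)⁻¹ • ∑ i, Z i ω := fun ω ↦ by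
    simp [Z, n, Finset.sum_sub_distrib, smul_sub, ← Nat.cast_smul_eq_nsmul ℝ, smul_smul, hn₀.ne']
  have hsqrt : √(n * log n) = √(log n / n) * n :=
    calc √(n * log n) = √(log n / n * n ^ 2) := by congr 1; field_simp
      _ = √(log n / n) * n := by rw [sqrt_mul' _ (by positivity), sqrt_sq hn₀.le]
  refine le_trans (measure_mono fun ω hω ↦ ?_) (measure_lt_norm_sum_le (Z := Z) hn
    (fun i ↦ (hX i).sub_const m) (hind.comp _ fun _ ↦ measurable_id.sub_const m)
    (fun i ↦ by
      filter_upwards [hXb i] with ω hω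
      linarith [norm_sub_le (X i ω) m, hm i])
    (fun i ↦ by
      rw [integral_sub (.of_bound (hX i).aestronglyMeasurable 1 (hXb i)) (integrable_const m),
        hXm i]
      simp)
    (fun i ↦ by
      simpa [Z, hXm] using integral_norm_sub_integral_sq_le (hX i).aestronglyMeasurable (hXb i)))
  replace hω : 4 * √(log n / n) < ‖∑ i, Z i ω‖ / n := by
    simpa [hcenter, norm_smul, inv_mul_eq_div] using hω
  show 4 * √(n * log n) < ‖∑ i, Z i ω‖
  rwa [hsqrt, ← mul_assoc, ← lt_div_iff₀ hn₀]

end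

/-- Let `X_1, …, X_n` (`n ≥ 2`) be i.i.d. random variables with values in a real separable
Hilbert space, with `‖X_i‖ ≤ 1` almost surely, and `ε_n = 4 √((log n)/n)`. Then with
probability at least `1 − n⁻²`, `‖(1/n) Σ_i X_i − E[X_1]‖ ≤ ε_n`. -/
theorem stmt8
    {H : Type*} [NormedAddCommGroup H] [InnerProductSpace ℝ H] [CompleteSpace H]
    [SecondCountableTopology H] [MeasurableSpace H] [BorelSpace H]
    {Ω : Type*} [MeasureSpace Ω] [IsProbabilityMeasure (ℙ : Measure Ω)]
    (n : ℕ) (hn : 2 ≤ n) (X : Fin n → Ω → H)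
    (hmeas : ∀ i, Measurable (X i))
    (hindep : iIndepFun X ℙ)
    (hident : ∀ i, IdentDistrib (X i) (X ⟨0, by omega⟩) ℙ ℙ)
    (hbound : ∀ i, ∀ᵐ ω, ‖X i ω‖ ≤ 1) :
    1 - ((n : ENNReal))⁻¹ ^ 2 ≤
      ℙ {ω | ‖(n : ℝ)⁻¹ • ∑ i, X i ω - ∫ ω', X ⟨0, by omega⟩ ω'‖ ≤ 4 * Real.sqrt (Real.log n / n)} := by
  have hmean : ∀ i, ∫ ω, X i ω = ∫ ω', X ⟨0, by omega⟩ ω' := fun i ↦ (hident i).integral_eq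
  apply one_sub_le_measure_of_measure_compl_le
  simp only [Set.compl_ofPred, not_le]
  rcases lt_or_ge n 8 with hsmall | hlarge
  · refine (le_of_eq ?_).trans zero_le
    simpa using measure_lt_norm_inv_card_smul_sum_sub_eq_zero (ι := Fin n) (μ := ℙ)
      (by rwa [Fintype.card_fin]) (by rw [Fintype.card_fin]; omega) hbound
      (by simpa using norm_integral_le_of_norm_le_const (hbound ⟨0, by omega⟩))
  · simpa using measure_lt_norm_inv_card_smul_sum_sub_le (ι := Fin n) (μ := ℙ)
      (by rwa [Fintype.card_fin]) hmeas hindep hbound hmean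
end

section
/- Let T : H → H₂ be a bounded linear operator between real Hilbert spaces, y ∈ H₂, S = T*T and b = T*y. Suppose the conjugate gradient recursion applied to S and b is run for m steps without breakdown (‖u_j‖ ≠ 0 and ⟨d_j, S d_j⟩ ≠ 0 for j < m). Then the m-th iterate g_m belongs to the Krylov space K_m(b, S) and minimizes ‖y − T g‖ over all g ∈ K_m(b, S). -/
open scoped RealInnerProductSpace
open ContinuousLinearMap

/-!
Writing `u_j` for the residuals and `d_j` for the search directions, one shows by induction that
`u_j ⊥ d_i` and `⟪d_j, S d_i⟫ = 0` for `i < j ≤ m`, using the symmetry of `S` and the choice of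
`α_j`, `β_j`. Without breakdown `S d_j` is a multiple of `u_j - u_{j+1}`, so the Krylov space
`K_m(b, S)` lies in the span of `d_0, …, d_{m-1}`; hence the residual `u_m = b - S g_m = T*(y - T g_m)`
is orthogonal to `K_m(b, S)`, which is the normal equation characterising the least squares
solution on `K_m(b, S)`.
-/

section SpanPrefix

variable (R : Type*) {M : Type*} [Semiring R] [AddCommMonoid M] [Module R M]

def spanPrefix (v : ℕ → M) (m : ℕ) : Submodule R M :=
  Submodule.span R (Set.range fun i : Fin m => v i)

variable {R} {v : ℕ → M} {m : ℕ}

theorem mem_spanPrefix {i : ℕ} (h : i < m) : v i ∈ spanPrefix R v m :=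
  Submodule.subset_span ⟨⟨i, h⟩, rfl⟩

theorem spanPrefix_le_iff {p : Submodule R M} : spanPrefix R v m ≤ p ↔ ∀ i < m, v i ∈ p := by
  simp [spanPrefix, Submodule.span_le, Set.range_subset_iff, Fin.forall_iff]

theorem spanPrefix_mono {k : ℕ} (h : k ≤ m) : spanPrefix R v k ≤ spanPrefix R v m :=
  spanPrefix_le_iff.2 fun _ hi => mem_spanPrefix (hi.trans_le h)

end SpanPrefix

theorem inner_eq_zero_of_mem_spanPrefix {E : Type*} [NormedAddCommGroup E] [InnerProductSpace ℝ E]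
    {v : ℕ → E} {m : ℕ} {x z : E} (h : ∀ i < m, ⟪x, v i⟫ = 0) (hz : z ∈ spanPrefix ℝ v m) :
    ⟪x, z⟫ = 0 :=
  Submodule.mem_orthogonal_singleton_iff_inner_right.1 <|
    spanPrefix_le_iff.2 (fun i hi => Submodule.mem_orthogonal_singleton_iff_inner_right.2 (h i hi)) hz

section Krylov

variable {R M : Type*} [Semiring R] [AddCommMonoid M] [Module R M] [TopologicalSpace M]

def krylov (S : M →L[R] M) (b : M) (m : ℕ) : Submodule R M :=
  spanPrefix R (fun i => (S ^ i) b) m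

variable {S : M →L[R] M} {b : M}

theorem mem_krylov_succ (m : ℕ) : b ∈ krylov S b (m + 1) :=
  mem_spanPrefix (v := fun i => (S ^ i) b) m.succ_pos

theorem apply_mem_krylov_succ {m : ℕ} {x : M} (hx : x ∈ krylov S b m) : S x ∈ krylov S b (m + 1) := by
  refine (spanPrefix_le_iff (p := (krylov S b (m + 1)).comap S.toLinearMap)).2 (fun i hi => ?_) hx
  rw [Submodule.mem_comap, coe_coe, ← mul_apply_eq_comp, ← pow_succ']
  exact mem_spanPrefix (Nat.succ_lt_succ hi)

end Krylov

section ConjGrad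

variable {E : Type*} [NormedAddCommGroup E] [InnerProductSpace ℝ E]

structure IsConjGrad (S : E →L[ℝ] E) (b : E) (g u d : ℕ → E) (α β : ℕ → ℝ) : Prop where
  g_zero : g 0 = 0
  u_zero : u 0 = b
  d_zero : d 0 = b
  α_eq : ∀ j, α j = ‖u j‖ ^ 2 / ⟪d j, S (d j)⟫
  g_succ : ∀ j, g (j + 1) = g j + α j • d j
  u_succ : ∀ j, u (j + 1) = u j - α j • S (d j)
  β_eq : ∀ j, β j = ‖u (j + 1)‖ ^ 2 / ‖u j‖ ^ 2
  d_succ : ∀ j, d (j + 1) = u (j + 1) + β j • d j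

namespace IsConjGrad

variable {S : E →L[ℝ] E} {b : E} {g u d : ℕ → E} {α β : ℕ → ℝ}

theorem u_eq_sub_apply_g (cg : IsConjGrad S b g u d α β) (j : ℕ) : u j = b - S (g j) := by
  induction j with
  | zero => simp [cg.u_zero, cg.g_zero]
  | succ j ih => rw [cg.u_succ, ih, cg.g_succ, map_add, map_smul]; abel

theorem u_mem_krylov_and_d_mem_krylov (cg : IsConjGrad S b g u d α β) (j : ℕ) :
    u j ∈ krylov S b (j + 1) ∧ d j ∈ krylov S b (j + 1) := by
  induction j with
  | zero => rw [cg.u_zero, cg.d_zero]; exact ⟨mem_krylov_succ 0, mem_krylov_succ 0⟩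
  | succ j ih =>
    have hu : u (j + 1) ∈ krylov S b (j + 2) := by
      rw [cg.u_succ]
      exact sub_mem (spanPrefix_mono (Nat.succ_le_succ j.le_succ) ih.1)
        (Submodule.smul_mem _ _ (apply_mem_krylov_succ ih.2))
    refine ⟨hu, ?_⟩
    rw [cg.d_succ]
    exact add_mem hu (Submodule.smul_mem _ _ (spanPrefix_mono (Nat.succ_le_succ j.le_succ) ih.2))

theorem g_mem_krylov (cg : IsConjGrad S b g u d α β) (j : ℕ) : g j ∈ krylov S b j := by
  induction j with
  | zero => rw [cg.g_zero]; exact zero_mem _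
  | succ j ih =>
    rw [cg.g_succ]
    exact add_mem (spanPrefix_mono j.le_succ ih)
      (Submodule.smul_mem _ _ (cg.u_mem_krylov_and_d_mem_krylov j).2)

theorem α_ne_zero (cg : IsConjGrad S b g u d α β) {j : ℕ} (hu : ‖u j‖ ≠ 0)
    (hd : ⟪d j, S (d j)⟫ ≠ 0) : α j ≠ 0 := by
  rw [cg.α_eq]
  exact div_ne_zero (pow_ne_zero 2 hu) hd

theorem apply_d_eq (cg : IsConjGrad S b g u d α β) {j : ℕ} (hα : α j ≠ 0) :
    S (d j) = (α j)⁻¹ • (u j - u (j + 1)) := by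
  rw [cg.u_succ, sub_sub_cancel, smul_smul, inv_mul_cancel₀ hα, one_smul]

theorem u_mem_spanPrefix_d (cg : IsConjGrad S b g u d α β) (j : ℕ) :
    u j ∈ spanPrefix ℝ d (j + 1) := by
  cases j with
  | zero => rw [cg.u_zero, ← cg.d_zero]; exact mem_spanPrefix Nat.one_pos
  | succ j =>
    rw [eq_sub_of_add_eq (cg.d_succ j).symm]
    exact sub_mem (mem_spanPrefix (j + 1).lt_succ_self)
      (Submodule.smul_mem _ _ (mem_spanPrefix (by omega)))

theorem apply_d_mem_spanPrefix_d (cg : IsConjGrad S b g u d α β) {j : ℕ} (hα : α j ≠ 0) :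
    S (d j) ∈ spanPrefix ℝ d (j + 2) := by
  rw [cg.apply_d_eq hα]
  exact Submodule.smul_mem _ _
    (sub_mem (spanPrefix_mono (j + 1).le_succ (cg.u_mem_spanPrefix_d j)) (cg.u_mem_spanPrefix_d _))

theorem krylov_le_spanPrefix_d (cg : IsConjGrad S b g u d α β) {m : ℕ}
    (hα : ∀ j < m, α j ≠ 0) : krylov S b m ≤ spanPrefix ℝ d m := by
  have hpow : ∀ i < m, (S ^ i) b ∈ spanPrefix ℝ d (i + 1) := by
    intro i
    induction i with
    | zero => intro _; rw [pow_zero, one_apply_eq_self, ← cg.d_zero]; exact mem_spanPrefix Nat.one_pos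
    | succ i ih =>
      intro hi
      have hS : spanPrefix ℝ d (i + 1) ≤ (spanPrefix ℝ d (i + 2)).comap S.toLinearMap :=
        spanPrefix_le_iff.2 fun k hk =>
          spanPrefix_mono (by omega) (cg.apply_d_mem_spanPrefix_d (hα k (by omega)))
      rw [pow_succ', mul_apply_eq_comp]
      exact hS (ih (by omega))
  exact spanPrefix_le_iff.2 fun i hi => spanPrefix_mono hi (hpow i hi)

theorem inner_u_d_self (cg : IsConjGrad S b g u d α β) {j : ℕ} (h : ∀ i < j, ⟪u j, d i⟫ = 0) :
    ⟪u j, d j⟫ = ‖u j‖ ^ 2 := by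
  cases j with
  | zero => rw [cg.d_zero, ← cg.u_zero, real_inner_self_eq_norm_sq]
  | succ j =>
    rw [cg.d_succ, inner_add_right, real_inner_smul_right, h j j.lt_succ_self,
      real_inner_self_eq_norm_sq, mul_zero, add_zero]

theorem inner_u_succ_d_eq_zero (cg : IsConjGrad S b g u d α β)
    (hS : (S : E →ₗ[ℝ] E).IsSymmetric) {j : ℕ}
    (hd : ⟪d j, S (d j)⟫ ≠ 0) (hud : ∀ i < j, ⟪u j, d i⟫ = 0)
    (hdd : ∀ i < j, ⟪d j, S (d i)⟫ = 0) : ∀ i < j + 1, ⟪u (j + 1), d i⟫ = 0 := by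
  intro i hi
  rw [cg.u_succ, inner_sub_left, real_inner_smul_left, hS.apply_clm]
  rcases Nat.lt_succ_iff_lt_or_eq.1 hi with hi | rfl
  · rw [hud i hi, hdd i hi, mul_zero, sub_zero]
  · rw [cg.inner_u_d_self hud, cg.α_eq, div_mul_cancel₀ _ hd, sub_self]

theorem inner_d_succ_apply_d_eq_zero (cg : IsConjGrad S b g u d α β) {j : ℕ}
    (hu : ‖u j‖ ≠ 0) (hα : ∀ i ≤ j, α i ≠ 0) (hdd : ∀ i < j, ⟪d j, S (d i)⟫ = 0)
    (hud : ∀ i < j + 1, ⟪u (j + 1), d i⟫ = 0) : ∀ i < j + 1, ⟪d (j + 1), S (d i)⟫ = 0 := by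
  intro i hi
  rw [cg.d_succ, inner_add_left, real_inner_smul_left]
  rcases Nat.lt_succ_iff_lt_or_eq.1 hi with hi | rfl
  · rw [hdd i hi, inner_eq_zero_of_mem_spanPrefix hud
      (spanPrefix_mono (by omega) (cg.apply_d_mem_spanPrefix_d (hα i hi.le))), mul_zero, add_zero]
  · have hα' := hα i le_rfl
    have huu : ⟪u (i + 1), u i⟫ = 0 :=
      inner_eq_zero_of_mem_spanPrefix hud (cg.u_mem_spanPrefix_d i)
    have hSd : ⟪u (i + 1), S (d i)⟫ = -(α i)⁻¹ * ‖u (i + 1)‖ ^ 2 := by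
      rw [cg.apply_d_eq hα', real_inner_smul_right, inner_sub_right, huu,
        real_inner_self_eq_norm_sq, zero_sub, mul_neg, neg_mul]
    rw [hSd, cg.β_eq, cg.α_eq, inv_div]
    field_simp
    ring

theorem inner_u_d_eq_zero_and_inner_d_apply_d_eq_zero (cg : IsConjGrad S b g u d α β)
    (hS : (S : E →ₗ[ℝ] E).IsSymmetric) {m : ℕ}
    (hnb : ∀ j < m, ‖u j‖ ≠ 0 ∧ ⟪d j, S (d j)⟫ ≠ 0) :
    ∀ j ≤ m, (∀ i < j, ⟪u j, d i⟫ = 0) ∧ ∀ i < j, ⟪d j, S (d i)⟫ = 0 := by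
  intro j
  induction j with
  | zero => intro _; simp
  | succ j ih =>
    intro hj
    obtain ⟨hud, hdd⟩ := ih (by omega)
    have hud' := cg.inner_u_succ_d_eq_zero hS (hnb j hj).2 hud hdd
    refine ⟨hud', cg.inner_d_succ_apply_d_eq_zero (hnb j hj).1 ?_ hdd hud'⟩
    intro i hi
    exact cg.α_ne_zero (hnb i (by omega)).1 (hnb i (by omega)).2

theorem inner_u_eq_zero_of_mem_krylov (cg : IsConjGrad S b g u d α β)
    (hS : (S : E →ₗ[ℝ] E).IsSymmetric) {m : ℕ}
    (hnb : ∀ j < m, ‖u j‖ ≠ 0 ∧ ⟪d j, S (d j)⟫ ≠ 0) {x : E} (hx : x ∈ krylov S b m) :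
    ⟪u m, x⟫ = 0 :=
  inner_eq_zero_of_mem_spanPrefix
    ((cg.inner_u_d_eq_zero_and_inner_d_apply_d_eq_zero hS hnb m le_rfl).1)
    (cg.krylov_le_spanPrefix_d (fun j hj => cg.α_ne_zero (hnb j hj).1 (hnb j hj).2) hx)

end IsConjGrad

end ConjGrad

theorem norm_sub_apply_le_of_inner_adjoint_eq_zero {H H₂ : Type*}
    [NormedAddCommGroup H] [InnerProductSpace ℝ H] [CompleteSpace H]
    [NormedAddCommGroup H₂] [InnerProductSpace ℝ H₂] [CompleteSpace H₂]
    (T : H →L[ℝ] H₂) {y : H₂} {g h : H} (hgh : ⟪adjoint T (y - T g), g - h⟫ = 0) :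
    ‖y - T g‖ ≤ ‖y - T h‖ := by
  rw [adjoint_inner_left, map_sub] at hgh
  have hpyth := norm_add_sq_eq_norm_sq_add_norm_sq_real hgh
  rw [sub_add_sub_cancel] at hpyth
  exact nonneg_le_nonneg_of_sq_le_sq (norm_nonneg _)
    (hpyth ▸ le_add_of_nonneg_right (mul_self_nonneg _))

/-- Let `S = T*T` and `b = T*y`. If the conjugate gradient recursion applied to `S` and `b`
is run for `m` steps without breakdown, then the `m`-th iterate `g_m` belongs to the Krylov
space `K_m(b, S) = span{b, S b, …, S^{m−1} b}` and minimizes `‖y − T g‖` over `K_m(b, S)`. -/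
theorem stmt10
    {H H₂ : Type*} [NormedAddCommGroup H] [InnerProductSpace ℝ H] [CompleteSpace H]
    [NormedAddCommGroup H₂] [InnerProductSpace ℝ H₂] [CompleteSpace H₂]
    (T : H →L[ℝ] H₂) (y : H₂)
    (S : H →L[ℝ] H) (hS : S = (adjoint T) ∘L T)
    (b : H) (hb : b = (adjoint T) y)
    (g u d : ℕ → H) (α β : ℕ → ℝ)
    (hg0 : g 0 = 0) (hu0 : u 0 = b) (hd0 : d 0 = b)
    (hα : ∀ j, α j = ‖u j‖ ^ 2 / ⟪d j, S (d j)⟫)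
    (hg : ∀ j, g (j + 1) = g j + α j • d j)
    (hu : ∀ j, u (j + 1) = u j - α j • S (d j))
    (hβ : ∀ j, β j = ‖u (j + 1)‖ ^ 2 / ‖u j‖ ^ 2)
    (hd : ∀ j, d (j + 1) = u (j + 1) + β j • d j)
    (m : ℕ)
    (hnb : ∀ j < m, ‖u j‖ ≠ 0 ∧ ⟪d j, S (d j)⟫ ≠ 0) :
    g m ∈ Submodule.span ℝ (Set.range fun i : Fin m => (S ^ (i : ℕ)) b) ∧
      ∀ h ∈ Submodule.span ℝ (Set.range fun i : Fin m => (S ^ (i : ℕ)) b),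
        ‖y - T (g m)‖ ≤ ‖y - T h‖ := by
  have cg : IsConjGrad S b g u d α β := ⟨hg0, hu0, hd0, hα, hg, hu, hβ, hd⟩
  have hSymm : (S : H →ₗ[ℝ] H).IsSymmetric := fun x z => by
    simp [hS, adjoint_inner_left, adjoint_inner_right]
  have hres : adjoint T (y - T (g m)) = u m := by
    rw [map_sub, ← hb, ← comp_apply, ← hS, cg.u_eq_sub_apply_g]
  refine ⟨cg.g_mem_krylov m, fun h hh => norm_sub_apply_le_of_inner_adjoint_eq_zero T ?_⟩
  rw [hres]
  exact cg.inner_u_eq_zero_of_mem_krylov hSymm hnb (sub_mem (cg.g_mem_krylov m) hh)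
end

section
/- In the perturbation setup, the operator norm of R − R̄ (from Euclidean ℝ^m to H) satisfies ‖R − R̄‖ ≤ √m ε + m ε ‖R‖; consequently ‖R − R̄‖ ≤ 2 m ε Δ^{1/2}. -/
/-!
Write `R v - R̄ v = (K_S v - K_S̄ v) b + K_S̄ v (b - b̄)` with `K_A v = ∑ i, v i • A ^ i`.
Since `‖S̄‖ ≤ 1`, the second term is at most `(∑ i, |v i|) ε ≤ √m ε ‖v‖`. For the first, Horner's
scheme `K_A v = v 0 + A K_A (σ v)`, with `σ` the downward shift of coefficients, unrolls the
difference into `∑_{j<m} S̄ ^ j (S - S̄) K_S (σ^(j+1) v) b = ∑_{j<m} S̄ ^ j (S - S̄) R (σ^(j+1) v)`,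
and shifting does not increase the Euclidean norm, so this is at most `m ε ‖R‖ ‖v‖`.
The second bound follows from `‖R‖ ^ 2 = ‖R* R‖ ≤ Δ` and `√m ≤ m √Δ`, as `1 / m ≤ Δ`.
-/

open scoped RealInnerProductSpace
open ContinuousLinearMap

open Finset

section Krylov

variable {𝕜 E : Type*} [NontriviallyNormedField 𝕜] [NormedAddCommGroup E] [NormedSpace 𝕜 E]

/-- Coefficients are indexed by `ℕ` so that shifts `fun i => c (i + k)` stay in the same type; a
vector of `EuclideanSpace 𝕜 (Fin m)` enters through its extension by zero. -/
def krylovSum (A : E →L[𝕜] E) (c : ℕ → 𝕜) (n : ℕ) (x : E) : E :=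
  ∑ i ∈ range n, c i • (A ^ i) x

lemma norm_pow_apply_le {A : E →L[𝕜] E} (hA : ‖A‖ ≤ 1) (i : ℕ) (x : E) : ‖(A ^ i) x‖ ≤ ‖x‖ := by
  induction i with
  | zero => simp
  | succ i ih =>
    rw [pow_succ', mul_apply_eq_comp]
    exact (le_opNorm _ _).trans ((mul_le_of_le_one_left (norm_nonneg _) hA).trans ih)

variable {A B : E →L[𝕜] E} (c : ℕ → 𝕜) (n : ℕ) (x y : E)

lemma krylovSum_sub_right : krylovSum A c n (x - y) = krylovSum A c n x - krylovSum A c n y := by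
  simp only [krylovSum, map_sub, smul_sub, sum_sub_distrib]

lemma krylovSum_succ :
    krylovSum A c (n + 1) x = c 0 • x + A (krylovSum A (fun i => c (i + 1)) n x) := by
  simp only [krylovSum, sum_range_succ', pow_zero, one_apply_eq_self, map_sum, map_smul, pow_succ',
    mul_apply_eq_comp]
  rw [add_comm]

lemma krylovSum_eq_of_le {N : ℕ} (hnN : n ≤ N) (hc : ∀ i, n ≤ i → c i = 0) :
    krylovSum A c N x = krylovSum A c n x := by
  refine (sum_subset (range_subset_range.2 hnN) fun i _ hi => ?_).symm
  rw [hc i (by simpa using hi), zero_smul]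

lemma norm_krylovSum_le (hA : ‖A‖ ≤ 1) :
    ‖krylovSum A c n x‖ ≤ (∑ i ∈ range n, ‖c i‖) * ‖x‖ := by
  rw [krylovSum, sum_mul]
  refine (norm_sum_le _ _).trans (sum_le_sum fun i _ => ?_)
  rw [norm_smul]
  exact mul_le_mul_of_nonneg_left (norm_pow_apply_le hA i x) (norm_nonneg _)

lemma norm_krylovSum_sub_le (hB : ‖B‖ ≤ 1) :
    ‖krylovSum A c n x - krylovSum B c n x‖ ≤
      ‖A - B‖ * ∑ j ∈ range n, ‖krylovSum A (fun i => c (i + (j + 1))) (n - (j + 1)) x‖ := by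
  induction n generalizing c with
  | zero => simp [krylovSum]
  | succ n ih =>
    set d : ℕ → 𝕜 := fun i => c (i + 1)
    have hsplit : krylovSum A c (n + 1) x - krylovSum B c (n + 1) x =
        (A - B) (krylovSum A d n x) + B (krylovSum A d n x - krylovSum B d n x) := by
      rw [krylovSum_succ, krylovSum_succ, map_sub, sub_apply]
      abel
    have hshift : ∀ j, (fun i => d (i + (j + 1))) = fun i => c (i + (j + 1 + 1)) :=
      fun j => funext fun i => by simp only [d, add_assoc]
    calc _ = ‖(A - B) (krylovSum A d n x) + B (krylovSum A d n x - krylovSum B d n x)‖ := by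
          rw [hsplit]
      _ ≤ ‖A - B‖ * ‖krylovSum A d n x‖ + ‖krylovSum A d n x - krylovSum B d n x‖ := by
          refine (norm_add_le _ _).trans (add_le_add (le_opNorm _ _) ?_)
          simpa using norm_pow_apply_le hB 1 (krylovSum A d n x - krylovSum B d n x)
      _ ≤ ‖A - B‖ * ‖krylovSum A d n x‖ + ‖A - B‖ *
            ∑ j ∈ range n, ‖krylovSum A (fun i => d (i + (j + 1))) (n - (j + 1)) x‖ := by
          gcongr; exact ih d
      _ = _ := by
          rw [sum_range_succ' _ n, mul_add, add_comm]
          simp only [hshift, Nat.add_sub_add_right, zero_add]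
          rfl

end Krylov

section Euclidean

variable {𝕜 E : Type*} [RCLike 𝕜] [NormedAddCommGroup E] [NormedSpace 𝕜 E] {m : ℕ}

lemma norm_toLp_sq (d : ℕ → 𝕜) :
    ‖(WithLp.toLp 2 fun i : Fin m => d i : EuclideanSpace 𝕜 (Fin m))‖ ^ 2 =
      ∑ i ∈ range m, ‖d i‖ ^ 2 := by
  rw [EuclideanSpace.norm_sq_eq]
  exact Fin.sum_univ_eq_sum_range (fun i => ‖d i‖ ^ 2) m

lemma sum_range_norm_le_sqrt_mul_norm_toLp (d : ℕ → 𝕜) :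
    ∑ i ∈ range m, ‖d i‖ ≤
      √m * ‖(WithLp.toLp 2 fun i : Fin m => d i : EuclideanSpace 𝕜 (Fin m))‖ := by
  have h := Real.sum_mul_le_sqrt_mul_sqrt (range m) (fun _ => 1) fun i => ‖d i‖
  simpa only [one_mul, one_pow, sum_const, card_range, nsmul_eq_mul, mul_one, ← norm_toLp_sq,
    Real.sqrt_sq (norm_nonneg _)] using h

lemma sum_range_add_le_sum_range {n : ℕ} {f : ℕ → ℝ} (hf : ∀ i, 0 ≤ f i)
    (hfn : ∀ i, n ≤ i → f i = 0) (k : ℕ) :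
    ∑ i ∈ range n, f (i + k) ≤ ∑ i ∈ range n, f i :=
  calc ∑ i ∈ range n, f (i + k) ≤ ∑ i ∈ range k, f i + ∑ i ∈ range n, f (k + i) := by
        simp only [add_comm _ k]; exact le_add_of_nonneg_left (sum_nonneg fun i _ => hf i)
    _ = ∑ i ∈ range n, f i + ∑ i ∈ range k, f (n + i) := by
        rw [← sum_range_add, ← sum_range_add, add_comm]
    _ = ∑ i ∈ range n, f i := by simp [hfn]

variable {S : E →L[𝕜] E} {b : E} {R : EuclideanSpace 𝕜 (Fin m) →L[𝕜] E}

lemma apply_toLp_eq_krylovSum (hR : ∀ v, R v = ∑ i : Fin m, v i • (S ^ (i : ℕ)) b)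
    (d : ℕ → 𝕜) :
    R (WithLp.toLp 2 fun i : Fin m => d i) = krylovSum S d m b := by
  rw [hR]
  exact Fin.sum_univ_eq_sum_range (fun i => d i • (S ^ i) b) m

lemma norm_krylovSum_shift_le (hR : ∀ v, R v = ∑ i : Fin m, v i • (S ^ (i : ℕ)) b)
    (c : ℕ → 𝕜) (hc : ∀ i, m ≤ i → c i = 0) (k : ℕ) :
    ‖krylovSum S (fun i => c (i + k)) (m - k) b‖ ≤
      ‖R‖ * ‖(WithLp.toLp 2 fun i : Fin m => c i : EuclideanSpace 𝕜 (Fin m))‖ := by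
  rw [← krylovSum_eq_of_le _ _ _ (Nat.sub_le m k) fun i hi => hc _ (by omega),
    ← apply_toLp_eq_krylovSum hR]
  refine (le_opNorm _ _).trans (mul_le_mul_of_nonneg_left ?_ (norm_nonneg R))
  refine (sq_le_sq₀ (norm_nonneg _) (norm_nonneg _)).1 ?_
  rw [norm_toLp_sq fun i => c (i + k), norm_toLp_sq]
  exact sum_range_add_le_sum_range (f := fun i => ‖c i‖ ^ 2) (fun i => by positivity)
    (fun i hi => by simp [hc i hi]) k

variable {S' : E →L[𝕜] E} {b' : E} {R' : EuclideanSpace 𝕜 (Fin m) →L[𝕜] E}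

lemma norm_sub_apply_toLp_le (hR : ∀ v, R v = ∑ i : Fin m, v i • (S ^ (i : ℕ)) b)
    (hR' : ∀ v, R' v = ∑ i : Fin m, v i • (S' ^ (i : ℕ)) b') (hS' : ‖S'‖ ≤ 1)
    (c : ℕ → 𝕜) (hc : ∀ i, m ≤ i → c i = 0) :
    ‖(R - R') (WithLp.toLp 2 fun i : Fin m => c i)‖ ≤
      (√m * ‖b - b'‖ + m * ‖S - S'‖ * ‖R‖) *
        ‖(WithLp.toLp 2 fun i : Fin m => c i : EuclideanSpace 𝕜 (Fin m))‖ := by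
  set v : EuclideanSpace 𝕜 (Fin m) := WithLp.toLp 2 fun i : Fin m => c i
  have hsplit : (R - R') v =
      (krylovSum S c m b - krylovSum S' c m b) + krylovSum S' c m (b - b') := by
    rw [sub_apply, apply_toLp_eq_krylovSum hR, apply_toLp_eq_krylovSum hR', krylovSum_sub_right]
    abel
  have hperturb : ‖krylovSum S c m b - krylovSum S' c m b‖ ≤ m * ‖S - S'‖ * ‖R‖ * ‖v‖ :=
    calc _ ≤ ‖S - S'‖ *
            ∑ j ∈ range m, ‖krylovSum S (fun i => c (i + (j + 1))) (m - (j + 1)) b‖ :=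
          norm_krylovSum_sub_le c m b hS'
      _ ≤ ‖S - S'‖ * ∑ j ∈ range m, ‖R‖ * ‖v‖ := by
          gcongr with j; exact norm_krylovSum_shift_le hR c hc (j + 1)
      _ = m * ‖S - S'‖ * ‖R‖ * ‖v‖ := by rw [sum_const, card_range, nsmul_eq_mul]; ring
  have hdata : ‖krylovSum S' c m (b - b')‖ ≤ √m * ‖b - b'‖ * ‖v‖ :=
    calc _ ≤ (∑ i ∈ range m, ‖c i‖) * ‖b - b'‖ := norm_krylovSum_le c m _ hS'
      _ ≤ √m * ‖v‖ * ‖b - b'‖ := by gcongr; exact sum_range_norm_le_sqrt_mul_norm_toLp c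
      _ = √m * ‖b - b'‖ * ‖v‖ := by ring
  rw [hsplit, add_mul, add_comm (√m * _ * _)]
  exact (norm_add_le _ _).trans (add_le_add hperturb hdata)

lemma norm_sub_le_of_krylov (hR : ∀ v, R v = ∑ i : Fin m, v i • (S ^ (i : ℕ)) b)
    (hR' : ∀ v, R' v = ∑ i : Fin m, v i • (S' ^ (i : ℕ)) b') (hS' : ‖S'‖ ≤ 1) :
    ‖R - R'‖ ≤ √m * ‖b - b'‖ + m * ‖S - S'‖ * ‖R‖ := by
  refine opNorm_le_bound _ (by positivity) fun v => ?_
  set c : ℕ → 𝕜 := fun i => if h : i < m then v ⟨i, h⟩ else 0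
  have hv : v = WithLp.toLp 2 fun i : Fin m => c i := by ext i; simp [c]
  rw [hv]
  exact norm_sub_apply_toLp_le hR hR' hS' c fun i hi => by simp [c, not_lt.2 hi]

end Euclidean

lemma Real.sqrt_le_mul_sqrt {x y : ℝ} (hx : 0 ≤ x) (h : 1 / x ≤ y) : √x ≤ x * √y :=
  calc √x = x * √(1 / x) := by rw [one_div, Real.sqrt_inv, ← div_eq_mul_inv, Real.div_sqrt]
    _ ≤ x * √y := by gcongr

theorem stmt13_general
    {H : Type*} [NormedAddCommGroup H] [InnerProductSpace ℝ H] [CompleteSpace H]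
    (S S' : H →L[ℝ] H)
    (hS'norm : ‖S'‖ ≤ 1)
    (b b' : H) (ε : ℝ)
    (hSd : ‖S - S'‖ ≤ ε) (hbd : ‖b - b'‖ ≤ ε)
    (m : ℕ)
    (R R' : EuclideanSpace ℝ (Fin m) →L[ℝ] H)
    (hR : ∀ v, R v = ∑ i : Fin m, v i • (S ^ (i : ℕ)) b)
    (hR' : ∀ v, R' v = ∑ i : Fin m, v i • (S' ^ (i : ℕ)) b')
    (M' : EuclideanSpace ℝ (Fin m) →L[ℝ] EuclideanSpace ℝ (Fin m))
    (hM' : M' = (adjoint R) ∘L R)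
    (Δ : ℝ) (hΔ : Δ = max ‖M'‖ (1 / (m : ℝ))) :
    ‖R - R'‖ ≤ Real.sqrt m * ε + m * ε * ‖R‖ ∧
      ‖R - R'‖ ≤ 2 * m * ε * Real.sqrt Δ := by
  have hε : 0 ≤ ε := (norm_nonneg _).trans hbd
  have hR_le : ‖R‖ ≤ √Δ := Real.le_sqrt_of_sq_le <| by
    rw [hΔ, sq, ← norm_adjoint_comp_self R, ← hM']
    exact le_max_left _ _
  have hm_le : √m ≤ m * √Δ := Real.sqrt_le_mul_sqrt m.cast_nonneg (hΔ ▸ le_max_right _ _)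
  have hbound : ‖R - R'‖ ≤ √m * ε + m * ε * ‖R‖ :=
    (norm_sub_le_of_krylov hR hR' hS'norm).trans (by gcongr)
  refine ⟨hbound, hbound.trans ?_⟩
  calc √m * ε + m * ε * ‖R‖ ≤ m * √Δ * ε + m * ε * √Δ := by gcongr
    _ = 2 * m * ε * √Δ := by ring

/-- In the perturbation setup, `‖R − R̄‖ ≤ √m ε + m ε ‖R‖`, and consequently
`‖R − R̄‖ ≤ 2 m ε Δ^{1/2}` where `Δ = max(‖M'‖, 1/m)` and `M' = R* R`. -/
theorem stmt13
    {H : Type*} [NormedAddCommGroup H] [InnerProductSpace ℝ H] [CompleteSpace H]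
    (S S' : H →L[ℝ] H)
    (hSsa : IsSelfAdjoint S) (hS'sa : IsSelfAdjoint S')
    (hSpos : ∀ x, 0 ≤ ⟪S x, x⟫) (hS'pos : ∀ x, 0 ≤ ⟪S' x, x⟫)
    (hSnorm : ‖S‖ ≤ 1) (hS'norm : ‖S'‖ ≤ 1)
    (b b' : H) (ε : ℝ) (hε : 0 < ε)
    (hSd : ‖S - S'‖ ≤ ε) (hbd : ‖b - b'‖ ≤ ε)
    (m : ℕ) (hm : 1 ≤ m)
    (R R' : EuclideanSpace ℝ (Fin m) →L[ℝ] H)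
    (hR : ∀ v, R v = ∑ i : Fin m, v i • (S ^ (i : ℕ)) b)
    (hR' : ∀ v, R' v = ∑ i : Fin m, v i • (S' ^ (i : ℕ)) b')
    (M' : EuclideanSpace ℝ (Fin m) →L[ℝ] EuclideanSpace ℝ (Fin m))
    (hM' : M' = (adjoint R) ∘L R)
    (Δ : ℝ) (hΔ : Δ = max ‖M'‖ (1 / (m : ℝ))) :
    ‖R - R'‖ ≤ Real.sqrt m * ε + m * ε * ‖R‖ ∧
      ‖R - R'‖ ≤ 2 * m * ε * Real.sqrt Δ :=
  stmt13_general S S' hS'norm b b' ε hSd hbd m R R' hR hR' M' hM' Δ hΔ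
end
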